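/- Let (M,i) and (N,j) be image-finite pointed modal transition systems over a finite event set Act. Then (M,i) ⪯ (N,j) if and only if for every term p of the process algebra MPA, (M,i) ⊨ᵃ φ_p implies (N,j) ⊨ᵃ φ_p. -/

import Mathlib

/-- A mixed transition system over event set `Act` with state set `σ`:
two transition relations `Ra` (asserted/must) and `Rc` (consistent/may). -/
structure MTS (Act σ : Type) where
  Ra : σ → Act → σ → Prop
  Rc : σ → Act → σ → Prop

namespace MTS

/-- `M` is a modal transition system iff `Ra ⊆ Rc`. -/
def IsModal {Act σ : Type} (M : MTS Act σ) : Prop :=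
  ∀ s α t, M.Ra s α t → M.Rc s α t

/-- `M` is image-finite. -/
def ImageFinite {Act σ : Type} (M : MTS Act σ) : Prop :=
  ∀ (s : σ) (α : Act), {t | M.Ra s α t}.Finite ∧ {t | M.Rc s α t}.Finite

end MTS

/-- A labelled transition system viewed as a mixed transition system `(Σ, R, R)`. -/
def LTS {Act σ : Type} (R : σ → Act → σ → Prop) : MTS Act σ := ⟨R, R⟩

/-- `Q` is a refinement from `M` to `N`. -/
def IsRefinement {Act σ τ : Type} (M : MTS Act σ) (N : MTS Act τ) (Q : σ → τ → Prop) : Prop :=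
  ∀ s t, Q s t → ∀ α : Act,
    (∀ s', M.Ra s α s' → ∃ t', N.Ra t α t' ∧ Q s' t') ∧
    (∀ t', N.Rc t α t' → ∃ s', M.Rc s α s' ∧ Q s' t')

/-- `(M,i) ⪯ (N,j)`: the pointed system `(N,j)` refines `(M,i)`. -/
def Refines {Act σ τ : Type} (M : MTS Act σ) (i : σ) (N : MTS Act τ) (j : τ) : Prop :=
  ∃ Q, IsRefinement M N Q ∧ Q i j

/-- Modes for the two judgments of the semantics: `a` (asserted), `c` (consistent). -/
inductive RMode where
  | a | c

/-- The dual mode: `¬a = c` and `¬c = a`. -/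
def RMode.negm : RMode → RMode
  | .a => .c
  | .c => .a

/-- The transition relation of mode `m`. -/
def MTS.R {Act σ : Type} (M : MTS Act σ) : RMode → σ → Act → σ → Prop
  | .a => M.Ra
  | .c => M.Rc

/-- Formulas of Hennessy–Milner logic over `Act`. -/
inductive HML (Act : Type) where
  | tt
  | neg (φ : HML Act)
  | dia (α : Act) (φ : HML Act)
  | and (φ ψ : HML Act)

/-- Larsen's semantics of Hennessy–Milner logic with two judgments `⊨ᵃ`, `⊨ᶜ`. -/
def Sat {Act σ : Type} (M : MTS Act σ) : HML Act → RMode → σ → Prop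
  | .tt, _, _ => True
  | .neg φ, m, s => ¬ Sat M φ m.negm s
  | .dia α φ, m, s => ∃ s', M.R m s α s' ∧ Sat M φ m s'
  | .and φ ψ, m, s => Sat M φ m s ∧ Sat M ψ m s

namespace HML

/-- `[α]φ = ¬⟨α⟩¬φ`. -/
def box {Act : Type} (α : Act) (φ : HML Act) : HML Act := .neg (.dia α (.neg φ))

/-- `φ ∨ ψ = ¬(¬φ ∧ ¬ψ)`. -/
def orf {Act : Type} (φ ψ : HML Act) : HML Act := .neg (.and (.neg φ) (.neg ψ))

/-- Finite conjunction (empty conjunction is `tt`). -/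
def bigAnd {Act : Type} : List (HML Act) → HML Act
  | [] => .tt
  | φ :: l => .and φ (bigAnd l)

/-- Finite disjunction (empty disjunction is `¬tt`). -/
def bigOr {Act : Type} : List (HML Act) → HML Act
  | [] => .neg .tt
  | φ :: l => orf φ (bigOr l)

/-- Modal depth of an HML formula. -/
def depth {Act : Type} : HML Act → ℕ
  | .tt => 0
  | .neg φ => φ.depth
  | .dia _ φ => 1 + φ.depth
  | .and φ ψ => max φ.depth ψ.depth

end HML

/-- Terms of the process algebra MPA. -/
inductive MPA (Act : Type) where
  | zero
  | bot
  | prefMust (α : Act) (p : MPA Act)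
  | prefMay (α : Act) (p : MPA Act)
  | plus (p q : MPA Act)

namespace MPA

variable {Act : Type} [DecidableEq Act]

/-- Must-successors of an MPA term for event `β` (structural operational semantics). -/
def must : MPA Act → Act → List (MPA Act)
  | .zero, _ => []
  | .bot, _ => []
  | .prefMust α p, β => if β = α then [p] else []
  | .prefMay _ _, _ => []
  | .plus p q, β => p.must β ++ q.must β

/-- All (must or may) successors of an MPA term for event `β`. -/
def may : MPA Act → Act → List (MPA Act)
  | .zero, _ => []
  | .bot, _ => [.bot]
  | .prefMust α p, β => if β = α then [p] else []
  | .prefMay α p, β => if β = α then [p] else []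
  | .plus p q, β => p.may β ++ q.may β

/-- The modal transition system `⟦·⟧` given by the structural operational semantics of MPA:
`Ra` is the set of must-transitions, `Rc` the set of all transitions. -/
def mts : MTS Act (MPA Act) :=
  ⟨fun p α q => q ∈ p.must α, fun p α q => q ∈ p.may α⟩

theorem sizeOf_lt_of_mem_must :
    ∀ (t : MPA Act) (α : Act) (r : MPA Act), r ∈ t.must α → sizeOf r < sizeOf t := by
  intro t
  induction t with
  | zero => intro α r h; simp [must] at h
  | bot => intro α r h; simp [must] at h
  | prefMust β p ih =>
      intro α r h
      simp only [must] at h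
      split at h <;> simp_all
  | prefMay β p ih => intro α r h; simp [must] at h
  | plus p q ihp ihq =>
      intro α r h
      simp only [must, List.mem_append] at h
      rcases h with h | h
      · have := ihp α r h; simp; omega
      · have := ihq α r h; simp; omega

theorem sizeOf_le_of_mem_may :
    ∀ (t : MPA Act) (α : Act) (r : MPA Act), r ∈ t.may α → sizeOf r ≤ sizeOf t := by
  intro t
  induction t with
  | zero => intro α r h; simp [may] at h
  | bot => intro α r h; simp [may] at h; simp [h]
  | prefMust β p ih =>
      intro α r h
      simp only [may] at h
      split at h <;> simp_all
  | prefMay β p ih =>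
      intro α r h
      simp only [may] at h
      split at h <;> simp_all
  | plus p q ihp ihq =>
      intro α r h
      simp only [may, List.mem_append] at h
      rcases h with h | h
      · have := ihp α r h; simp; omega
      · have := ihq α r h; simp; omega

theorem sizeOf_lt_plus_of_mem_may (p q : MPA Act) (α : Act) (r : MPA Act)
    (h : r ∈ (MPA.plus p q).may α) : sizeOf r < sizeOf (MPA.plus p q) := by
  simp only [may, List.mem_append] at h
  rcases h with h | h
  · have := sizeOf_le_of_mem_may p α r h; simp; omega
  · have := sizeOf_le_of_mem_may q α r h; simp; omega

end MPA

/-- The characteristic Hennessy–Milner formula `φ_p` of an MPA term `p`. -/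
noncomputable def charForm {Act : Type} [Fintype Act] [DecidableEq Act] : MPA Act → HML Act
  | .zero =>
      .bigAnd (((Finset.univ : Finset Act).toList).map fun α => .neg (.dia α .tt))
  | .bot => .tt
  | .prefMust α p =>
      .and (.dia α (charForm p)) (.and (HML.box α (charForm p))
        (.bigAnd ((((Finset.univ : Finset Act).toList).filter (fun β => β ≠ α)).map
          fun β => .neg (.dia β .tt))))
  | .prefMay α p =>
      .and (HML.box α (charForm p))
        (.bigAnd ((((Finset.univ : Finset Act).toList).filter (fun β => β ≠ α)).map
          fun β => .neg (.dia β .tt)))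
  | .plus p q =>
      .and
        (.bigAnd (((Finset.univ : Finset Act).toList).flatMap fun α =>
          ((MPA.plus p q).must α).attach.map fun r => HML.dia α (charForm r.1)))
        (.bigAnd (((Finset.univ : Finset Act).toList).map fun α =>
          HML.box α (.bigOr (((MPA.plus p q).may α).attach.map fun r => charForm r.1))))
decreasing_by
  all_goals first
    | exact MPA.sizeOf_lt_of_mem_must _ _ _ r.2
    | exact MPA.sizeOf_lt_plus_of_mem_may _ _ _ _ r.2
    | (simp; omega)
    | simp

/-- The formula `ψ_{w,α,p} = [δ₁]…[δₙ](⟨α⟩φ_p ∨ ¬⟨α⟩φ_p)`; the set `Φ` consists of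
all such formulas. -/
noncomputable def psiForm {Act : Type} [Fintype Act] [DecidableEq Act]
    (w : List Act) (α : Act) (p : MPA Act) : HML Act :=
  w.foldr (fun δ φ => HML.box δ φ)
    (HML.orf (.dia α (charForm p)) (.neg (.dia α (charForm p))))

/-- `Rᶜ`-reachability in a mixed transition system. -/
def MTS.ReachC {Act σ : Type} (M : MTS Act σ) : σ → σ → Prop :=
  Relation.ReflTransGen (fun s t => ∃ α, M.Rc s α t)

/-!
Satisfying `φ_p` in mode `a` is the same as refining the term `p`: the formula `φ_p` unfolds
into exactly one step of the refinement condition against the transitions of `p`, with the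
successors again required to satisfy their characteristic formulas. Hence the right-hand side
says that every MPA term refined by `(M,i)` is also refined by `(N,j)`, and refinement is
transitive. Conversely, image-finiteness lets us unfold `M` at `i` to depth `n` as an MPA term;
`(N,j)` refines all of these, which puts `(i,j)` into every `n`-step approximant of refinement,
and by image-finiteness again (a König-type argument) the intersection of the approximants is
itself a refinement.
-/

variable {Act σ τ υ : Type}

theorem Refines.trans {M : MTS Act σ} {N : MTS Act τ} {P : MTS Act υ} {i : σ} {j : τ} {k : υ}
    (h₁ : Refines M i N j) (h₂ : Refines N j P k) : Refines M i P k := by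
  obtain ⟨Q₁, hQ₁, hij⟩ := h₁
  obtain ⟨Q₂, hQ₂, hjk⟩ := h₂
  refine ⟨fun s u => ∃ t, Q₁ s t ∧ Q₂ t u, ?_, j, hij, hjk⟩
  rintro s u ⟨t, hst, htu⟩ α
  constructor
  · intro s' hs'
    obtain ⟨t', ht', hst'⟩ := (hQ₁ s t hst α).1 s' hs'
    obtain ⟨u', hu', htu'⟩ := (hQ₂ t u htu α).1 t' ht'
    exact ⟨u', hu', t', hst', htu'⟩
  · intro u' hu'
    obtain ⟨t', ht', htu'⟩ := (hQ₂ t u htu α).2 u' hu'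
    obtain ⟨s', hs', hst'⟩ := (hQ₁ s t hst α).2 t' ht'
    exact ⟨s', hs', t', hst', htu'⟩

section Sat

variable {M : MTS Act σ} {m : RMode} {s : σ}

theorem RMode.negm_negm (m : RMode) : m.negm.negm = m := by cases m <;> rfl

theorem sat_and {φ ψ : HML Act} : Sat M (.and φ ψ) m s ↔ Sat M φ m s ∧ Sat M ψ m s := Iff.rfl

theorem sat_orf {φ ψ : HML Act} : Sat M (HML.orf φ ψ) m s ↔ Sat M φ m s ∨ Sat M ψ m s := by
  simp [HML.orf, Sat, RMode.negm_negm, or_iff_not_and_not]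

theorem sat_bigAnd {l : List (HML Act)} : Sat M (HML.bigAnd l) m s ↔ ∀ φ ∈ l, Sat M φ m s := by
  induction l with
  | nil => simp [HML.bigAnd, Sat]
  | cons φ l ih => simp [HML.bigAnd, Sat, ih]

theorem sat_bigAnd_map {ι : Type} {f : ι → HML Act} {l : List ι} :
    Sat M (HML.bigAnd (l.map f)) m s ↔ ∀ x ∈ l, Sat M (f x) m s := by
  simp [sat_bigAnd]

theorem sat_bigOr_map {ι : Type} {f : ι → HML Act} {l : List ι} :
    Sat M (HML.bigOr (l.map f)) m s ↔ ∃ x ∈ l, Sat M (f x) m s := by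
  induction l with
  | nil => simp [HML.bigOr, Sat]
  | cons x l ih => simp [HML.bigOr, sat_orf, ih]

theorem sat_dia_a {α : Act} {φ : HML Act} :
    Sat M (.dia α φ) .a s ↔ ∃ s', M.Ra s α s' ∧ Sat M φ .a s' := Iff.rfl

theorem sat_box_a {α : Act} {φ : HML Act} :
    Sat M (HML.box α φ) .a s ↔ ∀ s', M.Rc s α s' → Sat M φ .a s' := by
  simp only [HML.box, Sat, RMode.negm, MTS.R, not_exists, not_and, not_not]

theorem sat_neg_dia_tt_a {α : Act} : Sat M (.neg (.dia α .tt)) .a s ↔ ∀ s', ¬ M.Rc s α s' := by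
  simp [Sat, RMode.negm, MTS.R]

theorem sat_box_and_forbid_others_a [Fintype Act] [DecidableEq Act] {α : Act} {φ : HML Act} :
    Sat M (.and (HML.box α φ) (.bigAnd (((Finset.univ : Finset Act).toList.filter (· ≠ α)).map
      fun β => .neg (.dia β .tt)))) .a s ↔ ∀ β s', M.Rc s β s' → β = α ∧ Sat M φ .a s' := by
  simp only [sat_and, sat_box_a, sat_bigAnd_map, sat_neg_dia_tt_a, List.mem_filter,
    Finset.mem_toList, Finset.mem_univ, true_and, ne_eq, decide_not, Bool.not_eq_true',
    decide_eq_false_iff_not]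
  constructor
  · rintro ⟨hbox, hforbid⟩ β s' hs'
    by_cases hβ : β = α
    · subst hβ
      exact ⟨rfl, hbox s' hs'⟩
    · exact absurd hs' (hforbid β hβ s')
  · intro h
    exact ⟨fun s' hs' => (h α s' hs').2, fun β hβ s' hs' => hβ (h β s' hs').1⟩

end Sat

/-- `IsRefinement M N Q` unfolds to `Q ≤ refineStep M N Q`. -/
def refineStep (M : MTS Act σ) (N : MTS Act τ) (Q : σ → τ → Prop) (s : σ) (t : τ) : Prop :=
  ∀ α : Act,
    (∀ s', M.Ra s α s' → ∃ t', N.Ra t α t' ∧ Q s' t') ∧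
    (∀ t', N.Rc t α t' → ∃ s', M.Rc s α s' ∧ Q s' t')

namespace MPA

variable [DecidableEq Act]

theorem sizeOf_lt_of_mem_may {p r : MPA Act} {α : Act} (hp : p ≠ .bot) (h : r ∈ p.may α) :
    sizeOf r < sizeOf p := by
  cases p with
  | zero => simp [may] at h
  | bot => exact absurd rfl hp
  | prefMust β q | prefMay β q =>
    simp only [may, List.mem_ite_nil_right, List.mem_singleton] at h
    simp [h.2]
  | plus p q => exact sizeOf_lt_plus_of_mem_may p q α r h

def sum : List (MPA Act) → MPA Act
  | [] => .zero
  | p :: l => .plus p (sum l)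

theorem mem_must_sum {l : List (MPA Act)} {α : Act} {r : MPA Act} :
    r ∈ (sum l).must α ↔ ∃ p ∈ l, r ∈ p.must α := by
  induction l with
  | nil => simp [sum, must]
  | cons p l ih => simp [sum, must, ih]

theorem mem_may_sum {l : List (MPA Act)} {α : Act} {r : MPA Act} :
    r ∈ (sum l).may α ↔ ∃ p ∈ l, r ∈ p.may α := by
  induction l with
  | nil => simp [sum, may]
  | cons p l ih => simp [sum, may, ih]

variable [Fintype Act]

noncomputable def ofSuccessors (mustSucc maySucc : Act → List (MPA Act)) : MPA Act :=
  sum ((Finset.univ : Finset Act).toList.flatMap fun α =>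
    (mustSucc α).map (prefMust α) ++ (maySucc α).map (prefMay α))

theorem mem_must_ofSuccessors {mustSucc maySucc : Act → List (MPA Act)} {α : Act}
    {r : MPA Act} : r ∈ (ofSuccessors mustSucc maySucc).must α ↔ r ∈ mustSucc α := by
  simp [ofSuccessors, mem_must_sum, or_and_right, exists_or, must]

theorem mem_may_ofSuccessors {mustSucc maySucc : Act → List (MPA Act)} {α : Act}
    {r : MPA Act} :
    r ∈ (ofSuccessors mustSucc maySucc).may α ↔ r ∈ mustSucc α ∨ r ∈ maySucc α := by
  simp [ofSuccessors, mem_may_sum, or_and_right, exists_or, may]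

end MPA

section CharForm

variable [Fintype Act] [DecidableEq Act]

theorem sat_charForm_iff (X : MTS Act σ) (p : MPA Act) (s : σ) :
    Sat X (charForm p) .a s ↔
      refineStep MPA.mts X (fun q t => Sat X (charForm q) .a t) p s := by
  cases p with
  | zero =>
    rw [charForm]
    simp [sat_bigAnd_map, sat_neg_dia_tt_a, refineStep, MPA.mts, MPA.must, MPA.may]
  | bot =>
    rw [charForm]
    simp [refineStep, MPA.mts, MPA.must, MPA.may, charForm, Sat]
  | prefMust α q =>
    rw [charForm, sat_and, sat_dia_a, sat_box_and_forbid_others_a]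
    simp [refineStep, MPA.mts, MPA.must, MPA.may, forall_and]
  | prefMay α q =>
    rw [charForm, sat_box_and_forbid_others_a]
    simp [refineStep, MPA.mts, MPA.must, MPA.may, forall_and]
  | plus p q =>
    rw [charForm]
    simp only [sat_and, sat_bigAnd, List.map_subtype, List.unattach_attach,
      List.forall_mem_flatMap, List.forall_mem_map, Finset.mem_toList, Finset.mem_univ,
      forall_const, sat_dia_a, sat_box_a, sat_bigOr_map, refineStep, MPA.mts, forall_and]

theorem sat_charForm_of_isRefinement {X : MTS Act σ} {Q : MPA Act → σ → Prop}
    (hQ : IsRefinement MPA.mts X Q) (p : MPA Act) (s : σ) (h : Q p s) :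
    Sat X (charForm p) .a s := by
  by_cases hp : p = .bot
  · subst hp
    rw [charForm]
    trivial
  refine (sat_charForm_iff X p s).2 fun α => ⟨fun r hr => ?_, fun s' hs' => ?_⟩
  · obtain ⟨s', hs', hrs'⟩ := (hQ p s h α).1 r hr
    exact ⟨s', hs', sat_charForm_of_isRefinement hQ r s' hrs'⟩
  · obtain ⟨r, hr, hrs'⟩ := (hQ p s h α).2 s' hs'
    exact ⟨r, hr, sat_charForm_of_isRefinement hQ r s' hrs'⟩
termination_by sizeOf p
decreasing_by
  · exact MPA.sizeOf_lt_of_mem_must p α r hr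
  · exact MPA.sizeOf_lt_of_mem_may hp hr

theorem refines_iff_sat_charForm (X : MTS Act σ) (p : MPA Act) (s : σ) :
    Refines MPA.mts p X s ↔ Sat X (charForm p) .a s :=
  ⟨fun ⟨_, hQ, hps⟩ => sat_charForm_of_isRefinement hQ p s hps,
    fun h => ⟨_, fun q t => (sat_charForm_iff X q t).1, h⟩⟩

end CharForm

theorem Set.Finite.exists_forall_of_antitone {α : Type} {S : Set α} (hS : S.Finite)
    {P : ℕ → α → Prop} (hP : Antitone P) (h : ∀ n, ∃ x ∈ S, P n x) : ∃ x ∈ S, ∀ n, P n x := by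
  by_contra! hne
  have hev : ∀ᶠ n in Filter.atTop, ∀ x ∈ S, ¬ P n x := by
    refine hS.eventually_all.2 fun x hx => ?_
    obtain ⟨m, hm⟩ := hne x hx
    exact Filter.eventually_atTop.2 ⟨m, fun n hmn hn => hm (hP hmn x hn)⟩
  obtain ⟨n, hn⟩ := hev.exists
  obtain ⟨x, hx, hPx⟩ := h n
  exact hn x hx hPx

section Approx

variable {M : MTS Act σ} {N : MTS Act τ}

theorem refineStep_mono : Monotone (refineStep M N) := by
  intro Q Q' hQQ' s t h α
  refine ⟨fun s' hs' => ?_, fun t' ht' => ?_⟩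
  · obtain ⟨t', ht', hQ⟩ := (h α).1 s' hs'
    exact ⟨t', ht', hQQ' s' t' hQ⟩
  · obtain ⟨s', hs', hQ⟩ := (h α).2 t' ht'
    exact ⟨s', hs', hQQ' s' t' hQ⟩

theorem refineStep_forall_of_antitone (hMf : M.ImageFinite) (hNf : N.ImageFinite)
    {Q : ℕ → σ → τ → Prop} (hQ : Antitone Q) {s : σ} {t : τ}
    (h : ∀ n, refineStep M N (Q n) s t) : refineStep M N (fun s' t' => ∀ n, Q n s' t') s t :=
  fun α =>
    ⟨fun s' hs' => (hNf t α).1.exists_forall_of_antitone (fun _ _ hmn t' => hQ hmn s' t')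
        fun n => (h n α).1 s' hs',
      fun t' ht' => (hMf s α).2.exists_forall_of_antitone (fun _ _ hmn s' => hQ hmn s' t')
        fun n => (h n α).2 t' ht'⟩

variable (M N) in
def refineApprox (n : ℕ) : σ → τ → Prop := (refineStep M N)^[n] ⊤

theorem refineApprox_succ (n : ℕ) :
    refineApprox M N (n + 1) = refineStep M N (refineApprox M N n) :=
  Function.iterate_succ_apply' _ _ _

theorem antitone_refineApprox : Antitone (refineApprox M N) :=
  refineStep_mono.antitone_iterate_of_map_le le_top

theorem isRefinement_forall_refineApprox (hMf : M.ImageFinite) (hNf : N.ImageFinite) :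
    IsRefinement M N (fun s t => ∀ n, refineApprox M N n s t) :=
  fun s t h => refineStep_forall_of_antitone hMf hNf antitone_refineApprox fun n => by
    rw [← refineApprox_succ]
    exact h (n + 1)

end Approx

section CharTerm

variable [Fintype Act] [DecidableEq Act] {M : MTS Act σ}

/-- The unfolding of `M` at `s` to depth `n`, cut off by `⊥`. -/
noncomputable def MTS.charTerm (M : MTS Act σ) (hMf : M.ImageFinite) : ℕ → σ → MPA Act
  | 0, _ => .bot
  | n + 1, s => MPA.ofSuccessors
      (fun α => (hMf s α).1.toFinset.toList.map (M.charTerm hMf n))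
      (fun α => (hMf s α).2.toFinset.toList.map (M.charTerm hMf n))

theorem MTS.mem_must_charTerm_succ {hMf : M.ImageFinite} {n : ℕ} {s : σ} {α : Act}
    {r : MPA Act} :
    r ∈ (M.charTerm hMf (n + 1) s).must α ↔ ∃ s', M.Ra s α s' ∧ M.charTerm hMf n s' = r := by
  simp [MTS.charTerm, MPA.mem_must_ofSuccessors]

theorem MTS.mem_may_charTerm_succ {hMf : M.ImageFinite} {n : ℕ} {s : σ} {α : Act}
    {r : MPA Act} :
    r ∈ (M.charTerm hMf (n + 1) s).may α ↔
      ∃ s', (M.Ra s α s' ∨ M.Rc s α s') ∧ M.charTerm hMf n s' = r := by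
  simp [MTS.charTerm, MPA.mem_may_ofSuccessors, or_and_right, exists_or]

theorem refines_charTerm (hMf : M.ImageFinite) (n : ℕ) (s : σ) :
    Refines MPA.mts (M.charTerm hMf n s) M s := by
  refine ⟨fun p u => ∃ m, M.charTerm hMf m u = p, ?_, n, rfl⟩
  rintro _ u ⟨m, rfl⟩ α
  cases m with
  | zero =>
    refine ⟨fun r hr => by simp [MTS.charTerm, MPA.mts, MPA.must] at hr, fun u' _ => ?_⟩
    exact ⟨.bot, by simp [MTS.charTerm, MPA.mts, MPA.may], 0, rfl⟩
  | succ m =>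
    refine ⟨fun r hr => ?_, fun u' hu' => ?_⟩
    · obtain ⟨s', hs', rfl⟩ := MTS.mem_must_charTerm_succ.1 hr
      exact ⟨s', hs', m, rfl⟩
    · exact ⟨_, MTS.mem_may_charTerm_succ.2 ⟨u', Or.inr hu', rfl⟩, m, rfl⟩

theorem refineApprox_of_refines_charTerm (hM : M.IsModal) (hMf : M.ImageFinite)
    {N : MTS Act τ} {Q : MPA Act → τ → Prop} (hQ : IsRefinement MPA.mts N Q) :
    ∀ (n : ℕ) (s : σ) (t : τ), Q (M.charTerm hMf n s) t → refineApprox M N n s t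
  | 0, _, _, _ => trivial
  | n + 1, s, t, h => by
    rw [refineApprox_succ]
    refine fun α => ⟨fun s' hs' => ?_, fun t' ht' => ?_⟩
    · obtain ⟨t', ht', hq⟩ :=
        (hQ _ _ h α).1 _ (MTS.mem_must_charTerm_succ.2 ⟨s', hs', rfl⟩)
      exact ⟨t', ht', refineApprox_of_refines_charTerm hM hMf hQ n s' t' hq⟩
    · obtain ⟨r, hr, hq⟩ := (hQ _ _ h α).2 t' ht'
      obtain ⟨s', hs', rfl⟩ := MTS.mem_may_charTerm_succ.1 hr
      exact ⟨s', hs'.elim (hM _ _ _) id,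
        refineApprox_of_refines_charTerm hM hMf hQ n s' t' hq⟩

theorem refines_iff_forall_mpa_refines (hM : M.IsModal) (hMf : M.ImageFinite)
    {N : MTS Act τ} (hNf : N.ImageFinite) (i : σ) (j : τ) :
    Refines M i N j ↔ ∀ p : MPA Act, Refines MPA.mts p M i → Refines MPA.mts p N j := by
  refine ⟨fun hij p hp => hp.trans hij, fun H => ?_⟩
  refine ⟨_, isRefinement_forall_refineApprox hMf hNf, fun n => ?_⟩
  obtain ⟨Q, hQ, hq⟩ := H _ (refines_charTerm hMf n i)
  exact refineApprox_of_refines_charTerm hM hMf hQ n i j hq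

end CharTerm

theorem refines_iff_charForms_general {Act σ τ : Type} [Fintype Act] [DecidableEq Act]
    (M : MTS Act σ) (N : MTS Act τ) (hM : M.IsModal)
    (hMf : M.ImageFinite) (hNf : N.ImageFinite) (i : σ) (j : τ) :
    Refines M i N j ↔
      ∀ p : MPA Act, Sat M (charForm p) .a i → Sat N (charForm p) .a j := by
  simp only [← refines_iff_sat_charForm]
  exact refines_iff_forall_mpa_refines hM hMf hNf i j

/-- For image-finite pointed modal transition systems `(M,i)`, `(N,j)`
over a finite event set, `(M,i) ⪯ (N,j)` iff for every MPA term `p`,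
`(M,i) ⊨ᵃ φ_p` implies `(N,j) ⊨ᵃ φ_p`. -/
theorem refines_iff_charForms {Act σ τ : Type} [Fintype Act] [DecidableEq Act]
    (M : MTS Act σ) (N : MTS Act τ) (hM : M.IsModal) (hN : N.IsModal)
    (hMf : M.ImageFinite) (hNf : N.ImageFinite) (i : σ) (j : τ) :
    Refines M i N j ↔
      ∀ p : MPA Act, Sat M (charForm p) .a i → Sat N (charForm p) .a j :=
  refines_iff_charForms_general M N hM hMf hNf i j
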